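/- arXiv:2405.05740 — 6 statements merged into one kernel-verified Lean document; each statement's English description precedes it below -/
import Mathlib

section
/- Let (Ω,μ) be a measure space with μ(Ω) < ∞, and let A and B be N-functions such that A satisfies the Δ₂-condition near infinity and B increases essentially more slowly than A near infinity. Let (uₙ) be a sequence of measurable real-valued functions on Ω with ∫_Ω A(|uₙ|) dμ < ∞ for every n and sup_n ‖uₙ‖_A < ∞, and suppose (uₙ) converges in measure to a measurable function u with ∫_Ω A(|u|) dμ < ∞. Then ‖uₙ − u‖_B → 0 as n → ∞. -/
open MeasureTheory Filter Set
open scoped ENNReal Topology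

/-- `A` is an N-function: `A t = ∫₀ᵗ a(s) ds` for some nondecreasing, right-continuous
`a : [0,∞) → [0,∞)` with `a 0 = 0` and `a(s) → ∞` as `s → ∞`. -/
def IsNFunction (A : ℝ → ℝ) : Prop :=
  ∃ a : ℝ → ℝ,
    (∀ s ≥ (0:ℝ), 0 ≤ a s) ∧
    MonotoneOn a (Set.Ici 0) ∧
    (∀ s ∈ Set.Ici (0:ℝ), ContinuousWithinAt a (Set.Ici s) s) ∧
    a 0 = 0 ∧
    Tendsto a atTop atTop ∧
    (∀ t ≥ (0:ℝ), A t = ∫ s in (0:ℝ)..t, a s)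

/-- The Luxemburg gauge `‖u‖_A = inf {λ > 0 : ∫ A(|u|/λ) dμ ≤ 1}`, with `inf ∅ = ∞`. -/
noncomputable def luxNorm {Ω : Type*} [MeasurableSpace Ω] (A : ℝ → ℝ)
    (μ : Measure Ω) (u : Ω → ℝ) : ℝ≥0∞ :=
  ⨅ (l : ℝ) (_ : 0 < l) (_ : ∫ x, A (|u x| / l) ∂μ ≤ 1), ENNReal.ofReal l

/-- `A` satisfies the Δ₂-condition near infinity. -/
def Delta2NearInfinity (A : ℝ → ℝ) : Prop :=
  ∀ r > (1:ℝ), ∃ k > (0:ℝ), ∃ t₀ ≥ (0:ℝ), ∀ t ≥ t₀, A (r * t) ≤ k * A t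

/-- `B` increases essentially more slowly than `A` near infinity. -/
def GrowsEssentiallyMoreSlowly (B A : ℝ → ℝ) : Prop :=
  ∀ δ > (1:ℝ), Tendsto (fun t => B (δ * t) / A t) atTop (𝓝 0)

lemma nfun_props {A : ℝ → ℝ} (hA : IsNFunction A) :
    MonotoneOn A (Set.Ici 0) ∧ (∀ t ≥ (0:ℝ), 0 ≤ A t) ∧
    (∃ c ≥ (0:ℝ), ∀ s ∈ Set.Icc (0:ℝ) 1, A s ≤ c * s) ∧
    (∀ᶠ t in atTop, (1:ℝ) ≤ A t) := by
  obtain ⟨a, ha0, hmono, -, -, hatop, hrep⟩ := hA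
  have hInt : ∀ s t : ℝ, 0 ≤ s → s ≤ t → IntervalIntegrable a MeasureTheory.volume s t := by
    intro s t hs hst
    apply (hmono.mono ?_).intervalIntegrable
    rw [Set.uIcc_of_le hst]
    exact fun x hx => le_trans hs hx.1
  have hsplit : ∀ s t : ℝ, 0 ≤ s → s ≤ t → A t = A s + ∫ x in s..t, a x := by
    intro s t hs hst
    rw [hrep s hs, hrep t (hs.trans hst),
      ← intervalIntegral.integral_add_adjacent_intervals (hInt 0 s le_rfl hs) (hInt s t hs hst)]
  have hnn : ∀ t ≥ (0:ℝ), 0 ≤ A t := by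
    intro t ht
    rw [hrep t ht]
    exact intervalIntegral.integral_nonneg ht (fun x hx => ha0 x hx.1)
  have hm : MonotoneOn A (Set.Ici 0) := by
    intro s hs t ht hst
    rw [hsplit s t hs hst]
    have : 0 ≤ ∫ x in s..t, a x :=
      intervalIntegral.integral_nonneg hst (fun x hx => ha0 x (le_trans hs hx.1))
    linarith
  refine ⟨hm, hnn, ⟨a 1, ha0 1 zero_le_one, ?_⟩, ?_⟩
  · intro s hs
    rw [hrep s hs.1]
    calc (∫ x in (0:ℝ)..s, a x) ≤ ∫ _ in (0:ℝ)..s, a 1 := by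
          apply intervalIntegral.integral_mono_on hs.1 (hInt 0 s le_rfl hs.1)
            intervalIntegrable_const
          exact fun x hx => hmono hx.1 (Set.mem_Ici.2 zero_le_one) (hx.2.trans hs.2)
      _ = a 1 * s := by simp [mul_comm]
  · obtain ⟨s₀, hs₀⟩ := eventually_atTop.1 (hatop.eventually_ge_atTop 1)
    set s₁ := max s₀ 0 with hs₁def
    filter_upwards [eventually_ge_atTop (s₁ + 1)] with t ht
    have hs₁0 : (0:ℝ) ≤ s₁ := le_max_right _ _
    have hst : s₁ ≤ t := by linarith
    rw [hsplit s₁ t hs₁0 hst]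
    have h1 : (t - s₁) * 1 ≤ ∫ x in s₁..t, a x := by
      calc (t - s₁) * 1 = ∫ _ in s₁..t, (1:ℝ) := by simp
        _ ≤ ∫ x in s₁..t, a x := by
            apply intervalIntegral.integral_mono_on hst intervalIntegrable_const
              (hInt s₁ t hs₁0 hst)
            exact fun x hx => hs₀ x (le_trans (le_max_left _ _) hx.1)
    have := hnn s₁ hs₁0
    linarith

lemma measurable_comp_nonneg {A : ℝ → ℝ} (hm : MonotoneOn A (Set.Ici 0))
    {Ω : Type*} [MeasurableSpace Ω] {f : Ω → ℝ} (hf : Measurable f) (hf0 : ∀ x, 0 ≤ f x) :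
    Measurable fun x => A (f x) := by
  have h : Monotone (fun t => A (max t 0)) := fun s t hst =>
    hm (Set.mem_Ici.2 (le_max_right _ _)) (Set.mem_Ici.2 (le_max_right _ _)) (max_le_max hst le_rfl)
  have heq : (fun x => A (f x)) = (fun t => A (max t 0)) ∘ f :=
    funext fun x => by simp [max_eq_left (hf0 x)]
  rw [heq]; exact h.measurable.comp hf

lemma integrable_comp_div {A : ℝ → ℝ} {Ω : Type*} [MeasurableSpace Ω] {μ : Measure Ω}
    [IsFiniteMeasure μ]
    (hm : MonotoneOn A (Set.Ici 0)) (hnn : ∀ t ≥ (0:ℝ), 0 ≤ A t)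
    (hΔ : Delta2NearInfinity A) {f : Ω → ℝ} (hf : Measurable f)
    (hfi : Integrable (fun x => A (|f x|)) μ) {l : ℝ} (hl : 0 < l) :
    Integrable (fun x => A (|f x| / l)) μ := by
  have habsnn : ∀ x, (0:ℝ) ≤ |f x| / l := fun x => div_nonneg (abs_nonneg _) hl.le
  have hmeas : Measurable fun x => A (|f x| / l) :=
    measurable_comp_nonneg hm (hf.abs.div_const l) habsnn
  rcases le_or_gt 1 l with h1l | hl1
  · apply hfi.mono' hmeas.aestronglyMeasurable
    refine ae_of_all _ fun x => ?_
    rw [Real.norm_eq_abs, abs_of_nonneg (hnn _ (habsnn x))]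
    exact hm (habsnn x) (Set.mem_Ici.2 (abs_nonneg _)) (div_le_self (abs_nonneg _) h1l)
  · set r := 1 / l with hr_def
    have hr : 1 < r := one_lt_one_div hl hl1
    obtain ⟨k, hk, t₀, ht₀, hbound⟩ := hΔ r hr
    have hrpos : 0 < r := lt_trans one_pos hr
    have : Integrable (fun x => k * A (|f x|) + A (r * t₀)) μ :=
      (hfi.const_mul k).add (integrable_const _)
    apply this.mono' hmeas.aestronglyMeasurable
    refine ae_of_all _ fun x => ?_
    rw [Real.norm_eq_abs, abs_of_nonneg (hnn _ (habsnn x))]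
    have heq : |f x| / l = r * |f x| := by rw [hr_def]; ring
    rw [heq]
    rcases le_or_gt t₀ (|f x|) with hcase | hcase
    · have h2 := hbound (|f x|) hcase
      have h3 : 0 ≤ A (r * t₀) := hnn _ (mul_nonneg hrpos.le ht₀)
      linarith
    · have h2 : A (r * |f x|) ≤ A (r * t₀) :=
        hm (Set.mem_Ici.2 (mul_nonneg hrpos.le (abs_nonneg _)))
          (Set.mem_Ici.2 (mul_nonneg hrpos.le ht₀))
          (by nlinarith [abs_nonneg (f x)])
      have h3 : 0 ≤ k * A (|f x|) := mul_nonneg hk.le (hnn _ (abs_nonneg _))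
      linarith

set_option maxHeartbeats 2000000 in
theorem luxNorm_tendsto_zero_of_tendstoInMeasure
    {Ω : Type*} [MeasurableSpace Ω] (μ : Measure Ω) [IsFiniteMeasure μ]
    (A B : ℝ → ℝ) (hA : IsNFunction A) (hB : IsNFunction B)
    (hΔ₂ : Delta2NearInfinity A)
    (hslow : GrowsEssentiallyMoreSlowly B A)
    (u : ℕ → Ω → ℝ) (humeas : ∀ n, Measurable (u n))
    (huint : ∀ n, Integrable (fun x => A (|u n x|)) μ)
    (hbdd : (⨆ n, luxNorm A μ (u n)) < ⊤)
    (g : Ω → ℝ) (hgmeas : Measurable g)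
    (hgint : Integrable (fun x => A (|g x|)) μ)
    (hconv : TendstoInMeasure μ u atTop g) :
    Tendsto (fun n => luxNorm B μ (fun x => u n x - g x)) atTop (𝓝 0) := by
  obtain ⟨hAm, hAnn, -, hAev⟩ := nfun_props hA
  obtain ⟨hBm, hBnn, ⟨cB, hcB0, hcBlin⟩, -⟩ := nfun_props hB
  -- extract a uniform bound from hbdd
  obtain ⟨K, hKpos, hKprop⟩ :
      ∃ K : ℝ, 0 < K ∧ ∀ n, ∃ l : ℝ, 0 < l ∧ l < K ∧ ∫ x, A (|u n x| / l) ∂μ ≤ 1 := by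
    set S := ⨆ n, luxNorm A μ (u n) with hS
    refine ⟨S.toReal + 1, by positivity, fun n => ?_⟩
    have h1 : luxNorm A μ (u n) < ENNReal.ofReal (S.toReal + 1) := by
      have h2 : luxNorm A μ (u n) ≤ S := le_iSup (fun n => luxNorm A μ (u n)) n
      have h3 : S < ENNReal.ofReal (S.toReal + 1) := by
        rw [ENNReal.ofReal_add ENNReal.toReal_nonneg zero_le_one,
          ENNReal.ofReal_toReal hbdd.ne, ENNReal.ofReal_one]
        exact ENNReal.lt_add_right hbdd.ne one_ne_zero
      exact lt_of_le_of_lt h2 h3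
    rw [luxNorm] at h1
    simp only [iInf_lt_iff] at h1
    obtain ⟨l, hl, hcond, hlK⟩ := h1
    exact ⟨l, hl, (ENNReal.ofReal_lt_ofReal_iff (by positivity)).1 hlK, hcond⟩
  set l₀ := max 1 K with hl₀def
  have hl₀1 : (1:ℝ) ≤ l₀ := le_max_left _ _
  have hl₀pos : (0:ℝ) < l₀ := lt_of_lt_of_le one_pos hl₀1
  have hKl₀ : K ≤ l₀ := le_max_right _ _
  clear_value l₀
  have hintA : ∀ n, ∀ {l : ℝ}, 0 < l → Integrable (fun x => A (|u n x| / l)) μ :=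
    fun n _ hl => integrable_comp_div hAm hAnn hΔ₂ (humeas n) (huint n) hl
  have hgintl : Integrable (fun x => A (|g x| / l₀)) μ :=
    integrable_comp_div hAm hAnn hΔ₂ hgmeas hgint hl₀pos
  -- uniform modular bound for u n at level l₀
  have hbound1 : ∀ n, ∫ x, A (|u n x| / l₀) ∂μ ≤ 1 := by
    intro n
    obtain ⟨l, hl, hlK, hcond⟩ := hKprop n
    have hle : l ≤ l₀ := le_trans hlK.le hKl₀
    have hpt : ∀ x, A (|u n x| / l₀) ≤ A (|u n x| / l) := by
      intro x
      apply hAm (Set.mem_Ici.2 (div_nonneg (abs_nonneg _) hl₀pos.le))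
        (Set.mem_Ici.2 (div_nonneg (abs_nonneg _) hl.le))
      gcongr
    calc ∫ x, A (|u n x| / l₀) ∂μ ≤ ∫ x, A (|u n x| / l) ∂μ :=
          integral_mono (hintA n hl₀pos) (hintA n hl) hpt
      _ ≤ 1 := hcond
  set lam := 2 * l₀ with hlamdef
  have hlampos : (0:ℝ) < lam := by rw [hlamdef]; positivity
  clear_value lam
  set M := 1 + ∫ x, A (|g x|) ∂μ with hMdef
  have hMg : (0:ℝ) ≤ ∫ x, A (|g x|) ∂μ :=
    integral_nonneg fun x => hAnn _ (abs_nonneg _)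
  have hM1 : (1:ℝ) ≤ M := by rw [hMdef]; linarith
  have hMpos : (0:ℝ) < M := lt_of_lt_of_le one_pos hM1
  clear_value M
  -- pointwise bound for the difference
  have hptA : ∀ n x, A (|u n x - g x| / lam) ≤ A (|u n x| / l₀) + A (|g x| / l₀) := by
    intro n x
    have h1 : |u n x - g x| ≤ |u n x| + |g x| := abs_sub _ _
    have hnn1 : 0 ≤ A (|u n x| / l₀) := hAnn _ (div_nonneg (abs_nonneg _) hl₀pos.le)
    have hnn2 : 0 ≤ A (|g x| / l₀) := hAnn _ (div_nonneg (abs_nonneg _) hl₀pos.le)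
    rcases le_total (|u n x|) (|g x|) with hc | hc
    · have h2 : |u n x - g x| / lam ≤ |g x| / l₀ := by
        rw [hlamdef, div_le_div_iff₀ (by positivity) hl₀pos]
        nlinarith
      have := hAm (Set.mem_Ici.2 (div_nonneg (abs_nonneg _) hlampos.le))
        (Set.mem_Ici.2 (div_nonneg (abs_nonneg _) hl₀pos.le)) h2
      linarith
    · have h2 : |u n x - g x| / lam ≤ |u n x| / l₀ := by
        rw [hlamdef, div_le_div_iff₀ (by positivity) hl₀pos]
        nlinarith
      have := hAm (Set.mem_Ici.2 (div_nonneg (abs_nonneg _) hlampos.le))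
        (Set.mem_Ici.2 (div_nonneg (abs_nonneg _) hl₀pos.le)) h2
      linarith
  have hvmeas : ∀ n, Measurable fun x => u n x - g x := fun n => (humeas n).sub hgmeas
  have hintV : ∀ n, Integrable (fun x => A (|u n x - g x| / lam)) μ := by
    intro n
    apply ((hintA n hl₀pos).add hgintl).mono'
      (measurable_comp_nonneg hAm ((hvmeas n).abs.div_const lam)
        (fun x => div_nonneg (abs_nonneg _) hlampos.le)).aestronglyMeasurable
    refine ae_of_all _ fun x => ?_
    rw [Real.norm_eq_abs, abs_of_nonneg (hAnn _ (div_nonneg (abs_nonneg _) hlampos.le))]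
    exact hptA n x
  have hboundV : ∀ n, ∫ x, A (|u n x - g x| / lam) ∂μ ≤ M := by
    intro n
    calc ∫ x, A (|u n x - g x| / lam) ∂μ
        ≤ ∫ x, (A (|u n x| / l₀) + A (|g x| / l₀)) ∂μ :=
          integral_mono (hintV n) ((hintA n hl₀pos).add hgintl) (hptA n)
      _ = (∫ x, A (|u n x| / l₀) ∂μ) + ∫ x, A (|g x| / l₀) ∂μ :=
          integral_add (hintA n hl₀pos) hgintl
      _ ≤ 1 + ∫ x, A (|g x|) ∂μ := by
          refine add_le_add (hbound1 n) (integral_mono hgintl hgint fun x => ?_)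
          apply hAm (Set.mem_Ici.2 (div_nonneg (abs_nonneg _) hl₀pos.le))
            (Set.mem_Ici.2 (abs_nonneg _))
          exact div_le_self (abs_nonneg _) hl₀1
      _ = M := hMdef.symm
  -- main argument
  rw [ENNReal.tendsto_nhds_zero]
  intro ε hε
  obtain ⟨ε', hε'pos, hε'lt, hε'le⟩ :
      ∃ ε' : ℝ, 0 < ε' ∧ ε' ≤ l₀ ∧ ENNReal.ofReal ε' ≤ ε := by
    rcases eq_or_ne ε ⊤ with rfl | hne
    · exact ⟨l₀, hl₀pos, le_rfl, le_top⟩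
    · have hεR : 0 < ε.toReal := ENNReal.toReal_pos hε.ne' hne
      refine ⟨min l₀ ε.toReal, lt_min hl₀pos hεR, min_le_left _ _, ?_⟩
      calc ENNReal.ofReal (min l₀ ε.toReal) ≤ ENNReal.ofReal ε.toReal :=
            ENNReal.ofReal_le_ofReal (min_le_right _ _)
        _ = ε := ENNReal.ofReal_toReal hne
  set δ := lam / ε' with hδdef
  have hδ : 1 < δ := by
    rw [hδdef, lt_div_iff₀ hε'pos]
    rw [hlamdef]; linarith
  clear_value δ
  obtain ⟨T, hT0, hTp⟩ : ∃ T ≥ (0:ℝ), ∀ t ≥ T, B (δ * t) ≤ 1 / (3 * M) * A t := by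
    have h1 := (hslow δ hδ).eventually (gt_mem_nhds (show (0:ℝ) < 1 / (3 * M) by positivity))
    obtain ⟨T₀, hT₀⟩ := eventually_atTop.1 (h1.and hAev)
    refine ⟨max T₀ 0, le_max_right _ _, fun t ht => ?_⟩
    obtain ⟨h2, h3⟩ := hT₀ t (le_trans (le_max_left _ _) ht)
    have hApos : 0 < A t := lt_of_lt_of_le one_pos h3
    exact le_of_lt ((div_lt_iff₀ hApos).1 h2)
  set C := B (lam * T / ε') with hCdef
  have hC0 : 0 ≤ C := hBnn _ (by positivity)
  clear_value C
  set m₀ := (μ Set.univ).toReal with hm₀def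
  have hm₀ : 0 ≤ m₀ := ENNReal.toReal_nonneg
  clear_value m₀
  set η := 1 / (3 * (m₀ + 1)) with hηdef
  have hη : 0 < η := by rw [hηdef]; positivity
  clear_value η
  set σ := ε' * min 1 (η / (cB + 1)) with hσdef
  have hminpos : 0 < min 1 (η / (cB + 1)) := lt_min one_pos (by positivity)
  have hσ : 0 < σ := mul_pos hε'pos hminpos
  have hσε' : σ / ε' = min 1 (η / (cB + 1)) := by
    rw [hσdef, mul_div_assoc]
    field_simp
  clear_value σ
  have hBσ : B (σ / ε') ≤ η := by
    rw [hσε']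
    calc B (min 1 (η / (cB + 1))) ≤ cB * min 1 (η / (cB + 1)) :=
          hcBlin _ ⟨hminpos.le, min_le_left _ _⟩
      _ ≤ cB * (η / (cB + 1)) := mul_le_mul_of_nonneg_left (min_le_right _ _) hcB0
      _ ≤ η := by
          rw [mul_div_assoc']
          rw [div_le_iff₀ (by positivity)]
          nlinarith
  have hmeasset : ∀ n, MeasurableSet {x | σ ≤ |u n x - g x|} := fun n =>
    measurableSet_le measurable_const (hvmeas n).abs
  have hconv' := hconv (ENNReal.ofReal σ) (ENNReal.ofReal_pos.2 hσ)
  simp only [edist_dist, ENNReal.ofReal_le_ofReal_iff dist_nonneg, Real.dist_eq] at hconv'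
  have hsetEq : ∀ i, {x | ENNReal.ofReal σ ≤ ENNReal.ofReal |u i x - g x|} = {x | σ ≤ |u i x - g x|} :=
    fun i => by ext x; exact ENNReal.ofReal_le_ofReal_iff (abs_nonneg _)
  simp only [hsetEq] at hconv'
  have hCpos : (0:ℝ) < 1 / (3 * (C + 1)) := by
    have h3C : (0:ℝ) < 3 * (C + 1) := by linarith
    positivity
  have hev := hconv'.eventually (gt_mem_nhds
    (show (0:ℝ≥0∞) < ENNReal.ofReal (1 / (3 * (C + 1))) from ENNReal.ofReal_pos.2 hCpos))
  filter_upwards [hev] with n hn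
  refine le_trans ?_ hε'le
  rw [luxNorm]
  refine iInf_le_of_le ε' (iInf_le_of_le hε'pos (iInf_le _ ?_))
  -- establish ∫ B(|u n - g|/ε') ≤ 1
  have hindint : Integrable ({x | σ ≤ |u n x - g x|}.indicator fun _ => C) μ :=
    (integrable_const C).indicator (hmeasset n)
  have hRHSint : Integrable (fun x => 1 / (3 * M) * A (|u n x - g x| / lam) +
      {x | σ ≤ |u n x - g x|}.indicator (fun _ => C) x + η) μ :=
    (((hintV n).const_mul _).add hindint).add (integrable_const η)
  have hpt : ∀ x, B (|u n x - g x| / ε') ≤ 1 / (3 * M) * A (|u n x - g x| / lam) +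
      {x | σ ≤ |u n x - g x|}.indicator (fun _ => C) x + η := by
    intro x
    have hs0 : (0:ℝ) ≤ |u n x - g x| := abs_nonneg _
    have hind0 : 0 ≤ {x | σ ≤ |u n x - g x|}.indicator (fun _ => C) x :=
      Set.indicator_nonneg (fun _ _ => hC0) x
    have hA0 : 0 ≤ 1 / (3 * M) * A (|u n x - g x| / lam) :=
      mul_nonneg (by positivity) (hAnn _ (by positivity))
    by_cases h1 : T ≤ |u n x - g x| / lam
    · have heq : |u n x - g x| / ε' = δ * (|u n x - g x| / lam) := by
        rw [hδdef]; field_simp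
      have h2 := hTp (|u n x - g x| / lam) h1
      rw [heq]; linarith
    · push_neg at h1
      have hslam : |u n x - g x| ≤ lam * T := by
        have := (div_lt_iff₀ hlampos).1 h1
        nlinarith
      by_cases h2 : σ ≤ |u n x - g x|
      · have hindeq : {x | σ ≤ |u n x - g x|}.indicator (fun _ => C) x = C :=
          Set.indicator_of_mem (show x ∈ {x | σ ≤ |u n x - g x|} from h2) fun _ => C
        have hle : B (|u n x - g x| / ε') ≤ C := by
          rw [hCdef]
          apply hBm (Set.mem_Ici.2 (by positivity)) (Set.mem_Ici.2 (by positivity))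
          gcongr
        rw [hindeq]; linarith
      · push_neg at h2
        have hle : B (|u n x - g x| / ε') ≤ B (σ / ε') := by
          apply hBm (Set.mem_Ici.2 (by positivity)) (Set.mem_Ici.2 (by positivity))
          gcongr
        linarith [hBσ]
  have hμset : (μ {x | σ ≤ |u n x - g x|}).toReal ≤ 1 / (3 * (C + 1)) :=
    ENNReal.toReal_le_of_le_ofReal hCpos.le hn.le
  calc ∫ x, B (|u n x - g x| / ε') ∂μ
      ≤ ∫ x, (1 / (3 * M) * A (|u n x - g x| / lam) +
          {x | σ ≤ |u n x - g x|}.indicator (fun _ => C) x + η) ∂μ :=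
        integral_mono_of_nonneg (ae_of_all _ fun x => hBnn _ (by positivity)) hRHSint
          (ae_of_all _ hpt)
    _ = 1 / (3 * M) * (∫ x, A (|u n x - g x| / lam) ∂μ) +
          (μ {x | σ ≤ |u n x - g x|}).toReal * C + η * m₀ := by
        have hf1 : Integrable (fun x => 1 / (3 * M) * A (|u n x - g x| / lam) +
            {x | σ ≤ |u n x - g x|}.indicator (fun _ => C) x) μ := by
          exact ((hintV n).const_mul _).add hindint
        rw [integral_add hf1 (integrable_const η),
          integral_add ((hintV n).const_mul _) hindint, integral_const_mul,
          integral_indicator_const _ (hmeasset n), integral_const]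
        simp only [smul_eq_mul, measureReal_def, ← hm₀def, mul_comm m₀ η]
    _ ≤ 1 / 3 + 1 / 3 + 1 / 3 := by
        have t1 : 1 / (3 * M) * (∫ x, A (|u n x - g x| / lam) ∂μ) ≤ 1 / 3 := by
          calc 1 / (3 * M) * (∫ x, A (|u n x - g x| / lam) ∂μ) ≤ 1 / (3 * M) * M :=
                mul_le_mul_of_nonneg_left (hboundV n) (by positivity)
            _ = 1 / 3 := by
                rw [div_mul_eq_mul_div, one_mul, mul_comm 3 M, ← div_div, div_self hMpos.ne']
        have t2 : (μ {x | σ ≤ |u n x - g x|}).toReal * C ≤ 1 / 3 := by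
          calc (μ {x | σ ≤ |u n x - g x|}).toReal * C ≤ 1 / (3 * (C + 1)) * C :=
                mul_le_mul_of_nonneg_right hμset hC0
            _ ≤ 1 / 3 := by
                have h3C : (0:ℝ) < 3 * (C + 1) := by linarith
                rw [div_mul_eq_mul_div, div_le_div_iff₀ h3C (by norm_num)]
                nlinarith
        have t3 : η * m₀ ≤ 1 / 3 := by
          rw [hηdef, div_mul_eq_mul_div, div_le_div_iff₀ (by positivity) (by norm_num)]
          nlinarith
        linarith
    _ = 1 := by norm_num
end

section
/- Let E be a real inner product space, let p > 1 be a real number, let x, y ∈ E with y ≠ 0, and let α ≥ 0, β > 0 be real numbers. Then ‖x‖^p + (p−1)·(α/β)^p·‖y‖^p − p·(α/β)^{p−1}·‖y‖^{p−2}·⟨x, y⟩ ≥ 0. -/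
open scoped RealInnerProductSpace

/-- Pointwise nonnegativity of the expression `L(v₁,v₂)` in Picone's identity
for the `p`-Laplacian. -/
theorem picone_pointwise_nonneg {E : Type*} [NormedAddCommGroup E]
    [InnerProductSpace ℝ E]
    (p : ℝ) (hp : 1 < p) (x y : E) (hy : y ≠ 0)
    (α β : ℝ) (hα : 0 ≤ α) (hβ : 0 < β) :
    0 ≤ ‖x‖ ^ p + (p - 1) * (α / β) ^ p * ‖y‖ ^ p
        - p * (α / β) ^ (p - 1) * ‖y‖ ^ (p - 2) * ⟪x, y⟫ := by
  set t : ℝ := α / β with htdef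
  have ht : 0 ≤ t := div_nonneg hα hβ.le
  have hny : (0:ℝ) < ‖y‖ := norm_pos_iff.mpr hy
  have hpq : p.HolderConjugate (p / (p - 1)) := Real.HolderConjugate.conjExponent hp
  set q : ℝ := p / (p - 1)
  have hc : (0:ℝ) ≤ t * ‖y‖ := mul_nonneg ht hny.le
  -- Young: a*b ≤ a^p/p + b^q/q with a = ‖x‖, b = (t‖y‖)^{p-1}
  have young := Real.young_inequality_of_nonneg (norm_nonneg x)
    (Real.rpow_nonneg hc (p - 1)) hpq
  have hbq : ((t * ‖y‖) ^ (p - 1)) ^ q = (t * ‖y‖) ^ p := by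
    rw [← Real.rpow_mul hc, hpq.sub_one_mul_conj]
  rw [hbq] at young
  -- so ‖x‖ * (t‖y‖)^(p-1) ≤ ‖x‖^p/p + (t‖y‖)^p/q
  have hkey : p * (‖x‖ * (t * ‖y‖) ^ (p - 1)) ≤ ‖x‖ ^ p + (p - 1) * (t * ‖y‖) ^ p := by
    have hp0 : (0:ℝ) < p := hpq.pos
    have := mul_le_mul_of_nonneg_left young hp0.le
    calc p * (‖x‖ * (t * ‖y‖) ^ (p - 1)) ≤ p * (‖x‖ ^ p / p + (t * ‖y‖) ^ p / q) := this
      _ = ‖x‖ ^ p + (p - 1) * (t * ‖y‖) ^ p := by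
          rw [mul_add, mul_div_cancel₀ _ hp0.ne', mul_div_assoc', mul_div_right_comm,
            hpq.div_conj_eq_sub_one]
  -- bound the inner product term
  have hinner : p * t ^ (p - 1) * ‖y‖ ^ (p - 2) * ⟪x, y⟫
      ≤ p * (‖x‖ * (t * ‖y‖) ^ (p - 1)) := by
    have h1 : ⟪x, y⟫ ≤ ‖x‖ * ‖y‖ := real_inner_le_norm x y
    have h2 : (t * ‖y‖) ^ (p - 1) = t ^ (p - 1) * ‖y‖ ^ (p - 1) :=
      Real.mul_rpow ht hny.le
    have h3 : ‖y‖ ^ (p - 2) * ‖y‖ = ‖y‖ ^ (p - 1) := by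
      nth_rewrite 2 [← Real.rpow_one ‖y‖]
      rw [← Real.rpow_add hny]; ring_nf
    have hnn : 0 ≤ p * t ^ (p - 1) * ‖y‖ ^ (p - 2) :=
      mul_nonneg (mul_nonneg hpq.pos.le (Real.rpow_nonneg ht _))
        (Real.rpow_nonneg hny.le _)
    calc p * t ^ (p - 1) * ‖y‖ ^ (p - 2) * ⟪x, y⟫
        ≤ p * t ^ (p - 1) * ‖y‖ ^ (p - 2) * (‖x‖ * ‖y‖) :=
          mul_le_mul_of_nonneg_left h1 hnn
      _ = p * (‖x‖ * (t * ‖y‖) ^ (p - 1)) := by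
          rw [h2]
          calc p * t ^ (p - 1) * ‖y‖ ^ (p - 2) * (‖x‖ * ‖y‖)
              = p * (‖x‖ * (t ^ (p - 1) * (‖y‖ ^ (p - 2) * ‖y‖))) := by ring
            _ = p * (‖x‖ * (t ^ (p - 1) * ‖y‖ ^ (p - 1))) := by rw [h3]
  have htp : (t * ‖y‖) ^ p = t ^ p * ‖y‖ ^ p := Real.mul_rpow ht hny.le
  have := hinner.trans hkey
  rw [htp] at this
  linarith
end

section
/- The function t ↦ (ln t)/(ln(1+t)) is strictly increasing on (0,∞). -/
open Real Set

lemma aux_hasDerivAt {x : ℝ} (hx : 0 < x) :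
    HasDerivAt (fun t : ℝ => Real.log t / Real.log (1 + t))
      ((x⁻¹ * Real.log (1 + x) - Real.log x * (1 + x)⁻¹) / (Real.log (1 + x))^2) x := by
  have h1 : HasDerivAt Real.log x⁻¹ x := Real.hasDerivAt_log hx.ne'
  have h2 : HasDerivAt (fun t : ℝ => Real.log (1 + t)) (1 + x)⁻¹ x := by
    have h : HasDerivAt (fun t : ℝ => 1 + t) 1 x := by
      simpa using (hasDerivAt_id x).const_add 1
    have := (Real.hasDerivAt_log (by linarith : (1:ℝ) + x ≠ 0)).comp x h
    rw [mul_one] at this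
    exact this
  have hne : Real.log (1 + x) ≠ 0 := ne_of_gt (Real.log_pos (by linarith))
  exact h1.div h2 hne

/-- The function `t ↦ (ln t)/(ln(1+t))` is strictly increasing on `(0,∞)`. -/
theorem log_div_log_one_add_strictMonoOn :
    StrictMonoOn (fun t : ℝ => Real.log t / Real.log (1 + t)) (Set.Ioi 0) := by
  apply strictMonoOn_of_deriv_pos (convex_Ioi 0)
  · apply ContinuousOn.div
    · exact Real.continuousOn_log.mono (by intro x hx; simpa using ne_of_gt hx)
    · apply ContinuousOn.log
      · exact (continuous_const.add continuous_id).continuousOn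
      · intro x hx
        have : (0:ℝ) < x := hx
        intro h; linarith
    · intro x hx
      have : (0:ℝ) < x := hx
      exact ne_of_gt (Real.log_pos (by linarith))
  · intro x hx
    rw [interior_Ioi] at hx
    have hx0 : (0:ℝ) < x := hx
    rw [(aux_hasDerivAt hx0).deriv]
    have hlt : Real.log x < Real.log (1 + x) := Real.log_lt_log hx0 (by linarith)
    have hpos : 0 < Real.log (1 + x) := Real.log_pos (by linarith)
    have hxi : 0 < x⁻¹ := inv_pos.mpr hx0
    have hxi2 : 0 < (1 + x)⁻¹ := inv_pos.mpr (by linarith)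
    have hii : (1 + x)⁻¹ < x⁻¹ := by
      exact inv_strictAnti₀ hx0 (by linarith)
    have key : 0 < x⁻¹ * Real.log (1 + x) - Real.log x * (1 + x)⁻¹ := by
      nlinarith [mul_pos hpos hxi2, mul_pos hpos hxi]
    exact div_pos key (pow_pos hpos 2)
end

section
/- Let N and p be real numbers with 1 < p < N, let p* = Np/(N−p), and for q ∈ (N/p, N) set P(q) := p*(1 − 1/q), θ(q) := (p*−1)/(P(q)−1), ϑ(q) := θ(q)·(P(q)−p). Then for every fixed t > 0, the function q ↦ Θ(q,t) := (1 + t^{p*−1})^{θ(q)−1} · t^{ϑ(q)} is strictly decreasing on the interval (N/p, N). -/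
/-- For `1 < p < N`, `p* = Np/(N−p)`, and `q ∈ (N/p, N)`, with
`P(q) = p*(1 − 1/q)`, `θ(q) = (p*−1)/(P(q)−1)`, `ϑ(q) = θ(q)·(P(q)−p)`,
the function `q ↦ (1 + t^{p*−1})^{θ(q)−1} · t^{ϑ(q)}` is strictly decreasing
on `(N/p, N)` for every fixed `t > 0`. -/
theorem theta_strictAntiOn (N p : ℝ) (hp : 1 < p) (hpN : p < N)
    (pstar : ℝ) (hpstar : pstar = N * p / (N - p))
    (P θ ϑ : ℝ → ℝ)
    (hP : ∀ q, P q = pstar * (1 - 1 / q))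
    (hθ : ∀ q, θ q = (pstar - 1) / (P q - 1))
    (hϑ : ∀ q, ϑ q = θ q * (P q - p)) :
    ∀ t > (0:ℝ),
      StrictAntiOn (fun q : ℝ => (1 + t ^ (pstar - 1)) ^ (θ q - 1) * t ^ ϑ q)
        (Set.Ioo (N / p) N) := by
  intro t ht
  have hNp : (0 : ℝ) < N - p := by linarith
  have hppos : (0 : ℝ) < p := by linarith
  have hpstar_gt : p < pstar := by
    rw [hpstar, lt_div_iff₀ hNp]
    nlinarith
  have ha : (0 : ℝ) < pstar - 1 := by linarith
  set a : ℝ := pstar - 1 with ha_def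
  set A : ℝ := 1 + t ^ (pstar - 1) with hA_def
  have htpow : (0 : ℝ) < t ^ (pstar - 1) := Real.rpow_pos_of_pos ht _
  have hA1 : (1 : ℝ) < A := by simp only [hA_def]; linarith
  have hApos : (0 : ℝ) < A := by linarith
  set L : ℝ := Real.log A with hL_def
  set T : ℝ := Real.log t with hT_def
  -- key inequality : L > (p-1) * T
  have key : (p - 1) * T < L := by
    rcases le_or_gt t 1 with h1 | h1
    · have hTle : T ≤ 0 := Real.log_nonpos (le_of_lt ht) h1
      have : (p - 1) * T ≤ 0 := mul_nonpos_of_nonneg_of_nonpos (by linarith) hTle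
      have hLpos : 0 < L := Real.log_pos hA1
      linarith
    · have hTpos : 0 < T := Real.log_pos h1
      have h2 : (p - 1) * T < (pstar - 1) * T := by
        apply mul_lt_mul_of_pos_right _ hTpos
        linarith
      have h3 : (pstar - 1) * T = Real.log (t ^ (pstar - 1)) := by
        rw [Real.log_rpow ht]
      have h4 : Real.log (t ^ (pstar - 1)) < L := by
        apply Real.log_lt_log htpow
        simp only [hA_def]; linarith
      linarith
  -- P q > p on the interval
  have hNq : (1 : ℝ) < N / p := (one_lt_div hppos).2 hpN
  have hpstar_pos : (0 : ℝ) < pstar := by linarith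
  have hPgt : ∀ q ∈ Set.Ioo (N / p) N, p < P q := by
    intro q hq
    rw [hP]
    have hq0 : (0 : ℝ) < q := by linarith [hq.1]
    have h1q : 1 / q < p / N := by
      rw [div_lt_div_iff₀ hq0 (by linarith : (0:ℝ) < N)]
      have := hq.1
      rw [div_lt_iff₀ hppos] at this
      linarith
    have hpeq : pstar * (1 - p / N) = p := by
      have hN0 : (N:ℝ) ≠ 0 := by linarith
      rw [hpstar]; field_simp
    calc p = pstar * (1 - p / N) := hpeq.symm
      _ < pstar * (1 - 1 / q) := by
          apply mul_lt_mul_of_pos_left _ hpstar_pos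
          linarith
  -- P strictly increasing
  intro q1 hq1 q2 hq2 hlt
  have hq10 : (0 : ℝ) < q1 := by linarith [hq1.1]
  have hq20 : (0 : ℝ) < q2 := by linarith [hq2.1]
  have hPmono : P q1 < P q2 := by
    rw [hP, hP]
    apply mul_lt_mul_of_pos_left _ hpstar_pos
    have : 1 / q2 < 1 / q1 := one_div_lt_one_div_of_lt hq10 hlt
    linarith
  set x1 : ℝ := P q1 with hx1_def
  set x2 : ℝ := P q2 with hx2_def
  have hx1 : p < x1 := hPgt q1 hq1
  have hx2 : p < x2 := hPgt q2 hq2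
  have d1 : (0 : ℝ) < x1 - 1 := by linarith
  have d2 : (0 : ℝ) < x2 - 1 := by linarith
  -- rewrite θ and ϑ
  have hθ1 : θ q1 = a / (x1 - 1) := by rw [hθ]
  have hθ2 : θ q2 = a / (x2 - 1) := by rw [hθ]
  have hϑ1 : ϑ q1 = a / (x1 - 1) * (x1 - p) := by rw [hϑ, hθ1]
  have hϑ2 : ϑ q2 = a / (x2 - 1) * (x2 - p) := by rw [hϑ, hθ2]
  -- reduce to exponent comparison via exp
  have hrw : ∀ q : ℝ, A ^ (θ q - 1) * t ^ ϑ q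
      = Real.exp ((θ q - 1) * L + ϑ q * T) := by
    intro q
    rw [Real.exp_add, Real.rpow_def_of_pos hApos, Real.rpow_def_of_pos ht,
      mul_comm L, mul_comm T]
  simp only [hrw]
  rw [Real.exp_lt_exp]
  rw [hθ1, hθ2, hϑ1, hϑ2]
  have hdiff : (a / (x1 - 1) - 1) * L + a / (x1 - 1) * (x1 - p) * T
      - ((a / (x2 - 1) - 1) * L + a / (x2 - 1) * (x2 - p) * T)
      = a * (x2 - x1) * (L - (p - 1) * T) / ((x1 - 1) * (x2 - 1)) := by
    field_simp
    ring
  have hpos : 0 < a * (x2 - x1) * (L - (p - 1) * T) / ((x1 - 1) * (x2 - 1)) := by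
    apply div_pos
    · apply mul_pos (mul_pos ha (by linarith)) (by linarith)
    · exact mul_pos d1 d2
  linarith
end

section
/- Let N and p be real numbers with 1 < p < N, let p* = Np/(N−p) and p' = p/(p−1), and for q ∈ (N/p, N) set P(q) := p*(1 − 1/q), θ(q) := (p*−1)/(P(q)−1), ϑ(q) := θ(q)·(P(q)−p). Then for every t > 0 and every q ∈ (N/p, N): (1 + t^{p*−1})^{θ(q)−1} · t^{ϑ(q)} ≥ (1 + t^{p*−1})^{p'/N} · t^{(p/N)(p*−1)}. -/
/-- For `1 < p < N`, `p* = Np/(N−p)`, `p' = p/(p−1)`, and `q ∈ (N/p, N)`, with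
`P(q) = p*(1 − 1/q)`, `θ(q) = (p*−1)/(P(q)−1)`, `ϑ(q) = θ(q)·(P(q)−p)`, one has
`(1 + t^{p*−1})^{θ(q)−1} · t^{ϑ(q)} ≥ (1 + t^{p*−1})^{p'/N} · t^{(p/N)(p*−1)}`
for every `t > 0`. -/
theorem theta_lower_bound (N p : ℝ) (hp : 1 < p) (hpN : p < N)
    (pstar p' : ℝ) (hpstar : pstar = N * p / (N - p)) (hp' : p' = p / (p - 1))
    (P θ ϑ : ℝ → ℝ)
    (hP : ∀ q, P q = pstar * (1 - 1 / q))
    (hθ : ∀ q, θ q = (pstar - 1) / (P q - 1))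
    (hϑ : ∀ q, ϑ q = θ q * (P q - p)) :
    ∀ t > (0:ℝ), ∀ q ∈ Set.Ioo (N / p) N,
      (1 + t ^ (pstar - 1)) ^ (p' / N) * t ^ ((p / N) * (pstar - 1)) ≤
        (1 + t ^ (pstar - 1)) ^ (θ q - 1) * t ^ ϑ q := by
  intro t ht q hq
  obtain ⟨hq1, hq2⟩ := hq
  have hp0 : (0:ℝ) < p := by linarith
  have hN0 : (0:ℝ) < N := by linarith
  have hNp : (0:ℝ) < N - p := by linarith
  have hp1 : (0:ℝ) < p - 1 := by linarith
  have hq1' : 1 < q := lt_trans ((one_lt_div hp0).2 hpN) hq1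
  have hq0 : (0:ℝ) < q := by linarith
  have hqpN : N < q * p := by
    have := (div_lt_iff₀ hp0).1 hq1
    linarith
  have hD : 0 < N * p * q - N * p - q * N + q * p := by nlinarith [mul_pos (mul_pos hN0 hp1) (sub_pos.2 hq1')]
  have hPq1 : P q - 1 = (N * p * q - N * p - q * N + q * p) / (q * (N - p)) := by
    rw [hP, hpstar]; field_simp; ring
  have hPq1pos : 0 < P q - 1 := by rw [hPq1]; positivity
  have hθeq : θ q - 1 = N * p / (N * p * q - N * p - q * N + q * p) := by
    have hD' : (N * p * q - N * p - q * N + q * p) ≠ 0 := ne_of_gt hD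
    have hNp' : N - p ≠ 0 := ne_of_gt hNp
    have hq0' : q ≠ 0 := ne_of_gt hq0
    rw [hθ, hPq1, hpstar]
    field_simp
    have hD2 : N * (p * (q - 1) - q) + p * q ≠ 0 := by contrapose! hD'; linarith
    field_simp
    ring
  have hc : 0 < θ q - 1 - p' / N := by
    rw [hθeq, hp', sub_pos, div_div, div_lt_div_iff₀ (by positivity) hD]
    nlinarith [mul_pos (mul_pos hp0 (sub_pos.2 hq2)) (by nlinarith : (0:ℝ) < N * (p - 1) + p)]
  have hs : 0 < pstar - 1 := by
    rw [hpstar, sub_pos, lt_div_iff₀ hNp]; nlinarith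
  have hϑeq : ϑ q = p / N * (pstar - 1) - (p - 1) * (θ q - 1 - p' / N) := by
    have hθval : θ q = (pstar - 1) / (P q - 1) := hθ q
    rw [hϑ, hθval, hPq1, hP, hpstar, hp']
    rw [div_div_eq_mul_div]
    have hNp' : N - p ≠ 0 := ne_of_gt hNp
    have hq0' : q ≠ 0 := ne_of_gt hq0
    have hD' : (N * p * q - N * p - q * N + q * p) ≠ 0 := ne_of_gt hD
    have hp1' : p - 1 ≠ 0 := ne_of_gt hp1
    have hN0' : N ≠ 0 := ne_of_gt hN0
    field_simp
    have hD2 : N * (p * (q - 1) - q) + p * q ≠ 0 := by contrapose! hD'; linarith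
    field_simp
    ring
  set c := θ q - 1 - p' / N with hcdef
  set A := 1 + t ^ (pstar - 1) with hA
  have hA1 : (1:ℝ) < A := by
    have : (0:ℝ) < t ^ (pstar - 1) := Real.rpow_pos_of_pos ht _
    linarith
  have hA0 : (0:ℝ) < A := by linarith
  have htp : t ^ (p - 1) ≤ A := by
    rcases le_or_gt t 1 with h | h
    · have : t ^ (p - 1) ≤ 1 := Real.rpow_le_one ht.le h (by linarith)
      linarith
    · have h1 : t ^ (p - 1) ≤ t ^ (pstar - 1) := by
        apply Real.rpow_le_rpow_of_exponent_le h.le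
        have : p < pstar := by rw [hpstar, lt_div_iff₀ hNp]; nlinarith
        linarith
      have : (0:ℝ) < (1:ℝ) := one_pos
      rw [hA]; linarith
  have key : t ^ ((p - 1) * c) ≤ A ^ c := by
    rw [show (p - 1) * c = (p - 1) * c from rfl, Real.rpow_mul ht.le]
    exact Real.rpow_le_rpow (Real.rpow_nonneg ht.le _) htp hc.le
  have hθsplit : θ q - 1 = p' / N + c := by rw [hcdef]; ring
  have hϑsplit : ϑ q = (p / N * (pstar - 1)) - (p - 1) * c := by rw [hϑeq]
  rw [hθsplit, hϑsplit, Real.rpow_add hA0, Real.rpow_sub ht]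
  rw [mul_div_assoc', le_div_iff₀ (Real.rpow_pos_of_pos ht _)]
  calc A ^ (p' / N) * t ^ (p / N * (pstar - 1)) * t ^ ((p - 1) * c)
      ≤ A ^ (p' / N) * t ^ (p / N * (pstar - 1)) * A ^ c := by
        apply mul_le_mul_of_nonneg_left key; positivity
    _ = A ^ (p' / N) * A ^ c * t ^ (p / N * (pstar - 1)) := by ring
end

section
/- Let f:[0,∞)→[0,∞) be continuous and strictly increasing with f(0)=0 and f(s)→∞ as s→∞, let F(s)=∫₀ˢ f(σ) dσ, and suppose there exist s₀ > 0 and c₀ > 1 such that s·f(s) ≥ c₀·F(s) for all s > s₀. Let A(t) := ∫₀ᵗ f⁻¹(τ) dτ, where f⁻¹:[0,∞)→[0,∞) is the inverse of f. Then t·f⁻¹(t) ≤ (c₀/(c₀−1))·A(t) for all t ≥ f(s₀). -/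
open Filter Set
open scoped Topology

lemma young_ge (f finv : ℝ → ℝ)
    (hf_cont : ContinuousOn f (Set.Ici 0))
    (hf_mono : StrictMonoOn f (Set.Ici 0))
    (hf0 : f 0 = 0)
    (hfinv_nonneg : ∀ t ≥ (0:ℝ), 0 ≤ finv t)
    (hfinv_left : ∀ s ≥ (0:ℝ), finv (f s) = s)
    (hfinv_right : ∀ t ≥ (0:ℝ), f (finv t) = t) :
    ∀ s ≥ (0:ℝ), s * f s ≤ (∫ τ in (0:ℝ)..f s, finv τ) + ∫ σ in (0:ℝ)..s, f σ := by
  have hf_nonneg : ∀ s ≥ (0:ℝ), 0 ≤ f s := by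
    intro s hs
    rcases eq_or_lt_of_le hs with h | h
    · simp [← h, hf0]
    · have := hf_mono (Set.self_mem_Ici) hs h
      linarith [this, hf0.symm ▸ this]
  have hfinv_mono : ∀ t₁ t₂ : ℝ, 0 ≤ t₁ → t₁ ≤ t₂ → finv t₁ ≤ finv t₂ := by
    intro t₁ t₂ h1 h12
    by_contra h
    push_neg at h
    have h2 : (0:ℝ) ≤ t₂ := le_trans h1 h12
    have := hf_mono (hfinv_nonneg t₂ h2) (hfinv_nonneg t₁ h1) h
    rw [hfinv_right t₂ h2, hfinv_right t₁ h1] at this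
    linarith
  have huIcc : ∀ a b : ℝ, 0 ≤ a → 0 ≤ b → Set.uIcc a b ⊆ Set.Ici 0 := by
    intro a b ha hb x hx
    rw [Set.mem_uIcc] at hx
    rcases hx with ⟨h1, _⟩ | ⟨h1, _⟩ <;> simp only [Set.mem_Ici] <;> linarith
  have hf_int : ∀ a b : ℝ, 0 ≤ a → 0 ≤ b → IntervalIntegrable f MeasureTheory.volume a b := by
    intro a b ha hb
    exact (hf_cont.mono (huIcc a b ha hb)).intervalIntegrable
  have hfinv_int : ∀ a b : ℝ, 0 ≤ a → 0 ≤ b →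
      IntervalIntegrable finv MeasureTheory.volume a b := by
    intro a b ha hb
    refine MonotoneOn.intervalIntegrable ?_
    intro x hx y hy hxy
    exact hfinv_mono x y (huIcc a b ha hb hx) hxy
  intro s hs
  -- step inequality
  have step : ∀ a b : ℝ, 0 ≤ a → a ≤ b →
      ((∫ τ in (0:ℝ)..f a, finv τ) + (∫ σ in (0:ℝ)..a, f σ) - a * f a)
        - (b - a) * (f b - f a)
      ≤ ((∫ τ in (0:ℝ)..f b, finv τ) + (∫ σ in (0:ℝ)..b, f σ) - b * f b) := by
    intro a b ha hab
    have hb : (0:ℝ) ≤ b := le_trans ha hab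
    have hfa : (0:ℝ) ≤ f a := hf_nonneg a ha
    have hfab : f a ≤ f b := by
      rcases eq_or_lt_of_le hab with h | h
      · rw [h]
      · exact le_of_lt (hf_mono ha hb h)
    have h1 : a * (f b - f a) ≤ ∫ τ in f a..f b, finv τ := by
      have hci : IntervalIntegrable (fun _ => a) MeasureTheory.volume (f a) (f b) :=
        intervalIntegrable_const
      have hii : IntervalIntegrable finv MeasureTheory.volume (f a) (f b) :=
        hfinv_int _ _ hfa (le_trans hfa hfab)
      have := intervalIntegral.integral_mono_on hfab hci hii (fun x hx => by
        have hx0 : (0:ℝ) ≤ x := le_trans hfa hx.1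
        have := hfinv_mono (f a) x hfa hx.1
        rw [hfinv_left a ha] at this
        exact this)
      rw [intervalIntegral.integral_const] at this
      calc a * (f b - f a) = (f b - f a) • a := by rw [smul_eq_mul]; ring
      _ ≤ _ := this
    have h2 : f a * (b - a) ≤ ∫ σ in a..b, f σ := by
      have hci : IntervalIntegrable (fun _ => f a) MeasureTheory.volume a b :=
        intervalIntegrable_const
      have := intervalIntegral.integral_mono_on hab hci (hf_int a b ha hb) (fun x hx => by
        rcases eq_or_lt_of_le hx.1 with h | h
        · rw [h]
        · exact le_of_lt (hf_mono ha (le_trans ha hx.1) h))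
      rw [intervalIntegral.integral_const] at this
      calc f a * (b - a) = (b - a) • f a := by rw [smul_eq_mul]; ring
      _ ≤ _ := this
    have hsplit1 : (∫ τ in (0:ℝ)..f a, finv τ) + (∫ τ in f a..f b, finv τ)
        = ∫ τ in (0:ℝ)..f b, finv τ :=
      intervalIntegral.integral_add_adjacent_intervals (hfinv_int 0 (f a) le_rfl hfa)
        (hfinv_int (f a) (f b) hfa (le_trans hfa hfab))
    have hsplit2 : (∫ σ in (0:ℝ)..a, f σ) + (∫ σ in a..b, f σ) = ∫ σ in (0:ℝ)..b, f σ :=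
      intervalIntegral.integral_add_adjacent_intervals (hf_int 0 a le_rfl ha) (hf_int a b ha hb)
    nlinarith [h1, h2, hsplit1, hsplit2]
  -- partition argument
  have key : ∀ n : ℕ, 1 ≤ n →
      -(s / n) * f s ≤ (∫ τ in (0:ℝ)..f s, finv τ) + (∫ σ in (0:ℝ)..s, f σ) - s * f s := by
    intro n hn
    have hn0 : (0:ℝ) < n := by exact_mod_cast hn
    have main : ∀ i : ℕ, i ≤ n →
        -(s / n) * f (s * i / n) ≤
          (∫ τ in (0:ℝ)..f (s * i / n), finv τ) + (∫ σ in (0:ℝ)..(s * i / n), f σ)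
            - (s * i / n) * f (s * i / n) := by
      intro i
      induction i with
      | zero =>
        intro _
        simp [hf0]
      | succ i ih =>
        intro hin
        have hi : i ≤ n := le_of_lt (Nat.lt_of_succ_le hin)
        have ih' := ih hi
        push_cast
        set a : ℝ := s * i / n with ha_def
        set b : ℝ := s * ((i:ℝ) + 1) / n with hb_def
        have ha : (0:ℝ) ≤ a := by
          apply div_nonneg _ (le_of_lt hn0)
          positivity
        have hab : a ≤ b := by
          rw [ha_def, hb_def]
          have h1 : s * (i:ℝ) ≤ s * ((i:ℝ) + 1) := by nlinarith
          exact div_le_div_of_nonneg_right h1 (le_of_lt hn0)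
        have hba : b - a = s / n := by
          rw [ha_def, hb_def]
          field_simp
          ring
        have hstep := step a b ha hab
        rw [hba] at hstep
        have expand : (s / n) * (f b - f a) = (s / n) * f b - (s / n) * f a := by ring
        linarith
    have := main n le_rfl
    have hsn : s * n / n = s := by field_simp
    rw [hsn] at this
    exact this
  -- take limit
  have htend : Tendsto (fun n : ℕ => -(s / n) * f s) atTop (𝓝 0) := by
    have h1 : Tendsto (fun n : ℕ => s / n) atTop (𝓝 0) :=
      tendsto_const_div_atTop_nhds_zero_nat s
    have := (h1.neg).mul_const (f s)
    simpa using this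
  have := le_of_tendsto htend (Filter.eventually_atTop.mpr ⟨1, fun n hn => key n hn⟩)
  linarith


/-- If `f` is continuous, strictly increasing on `[0,∞)` with `f(0)=0`, `f(s) → ∞`,
`F(s) = ∫₀ˢ f`, and there are `s₀ > 0`, `c₀ > 1` with `s·f(s) ≥ c₀·F(s)` for `s > s₀`,
then the N-function `A(t) = ∫₀ᵗ f⁻¹` satisfies `t·f⁻¹(t) ≤ (c₀/(c₀−1))·A(t)` for
all `t ≥ f(s₀)`. -/
theorem delta2_criterion_of_superlinear (f finv : ℝ → ℝ)
    (hf_cont : ContinuousOn f (Set.Ici 0))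
    (hf_mono : StrictMonoOn f (Set.Ici 0))
    (hf0 : f 0 = 0)
    (hf_top : Tendsto f atTop atTop)
    (hfinv_nonneg : ∀ t ≥ (0:ℝ), 0 ≤ finv t)
    (hfinv_left : ∀ s ≥ (0:ℝ), finv (f s) = s)
    (hfinv_right : ∀ t ≥ (0:ℝ), f (finv t) = t)
    (s₀ c₀ : ℝ) (hs₀ : 0 < s₀) (hc₀ : 1 < c₀)
    (hsf : ∀ s > s₀, c₀ * (∫ σ in (0:ℝ)..s, f σ) ≤ s * f s) :
    ∀ t ≥ f s₀, t * finv t ≤ (c₀ / (c₀ - 1)) * ∫ τ in (0:ℝ)..t, finv τ := by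
  have hf_nonneg : ∀ s ≥ (0:ℝ), 0 ≤ f s := by
    intro s hs
    rcases eq_or_lt_of_le hs with h | h
    · simp [← h, hf0]
    · have := hf_mono Set.self_mem_Ici hs h
      rw [hf0] at this
      exact le_of_lt this
  have huIcc : ∀ a b : ℝ, 0 ≤ a → 0 ≤ b → Set.uIcc a b ⊆ Set.Ici 0 := by
    intro a b ha hb x hx
    rw [Set.mem_uIcc] at hx
    rcases hx with ⟨h1, _⟩ | ⟨h1, _⟩ <;> simp only [Set.mem_Ici] <;> linarith
  have hf_int : ∀ a b : ℝ, 0 ≤ a → 0 ≤ b → IntervalIntegrable f MeasureTheory.volume a b := by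
    intro a b ha hb
    exact (hf_cont.mono (huIcc a b ha hb)).intervalIntegrable
  intro t ht
  have hfs₀ : 0 < f s₀ := by
    have := hf_mono Set.self_mem_Ici (le_of_lt hs₀) hs₀
    rwa [hf0] at this
  have ht0 : (0:ℝ) ≤ t := le_trans (le_of_lt hfs₀) ht
  set s : ℝ := finv t with hs_def
  have hs_nn : (0:ℝ) ≤ s := hfinv_nonneg t ht0
  have hfs : f s = t := hfinv_right t ht0
  have hs_ge : s₀ ≤ s := by
    by_contra h
    push_neg at h
    have := hf_mono hs_nn (le_of_lt hs₀) h
    rw [hfs] at this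
    linarith
  -- key inequality at s ≥ s₀
  have hkey : c₀ * (∫ σ in (0:ℝ)..s, f σ) ≤ s * f s := by
    rcases eq_or_lt_of_le hs_ge with h | h
    · -- s = s₀ : take one-sided limit
      have hev : ∀ u > s₀, c₀ * (∫ σ in (0:ℝ)..s₀, f σ) ≤ u * f u := by
        intro u hu
        have hu0 : (0:ℝ) ≤ u := le_trans (le_of_lt hs₀) (le_of_lt hu)
        have hmono : (∫ σ in (0:ℝ)..s₀, f σ) ≤ ∫ σ in (0:ℝ)..u, f σ := by
          have hsplit : (∫ σ in (0:ℝ)..s₀, f σ) + (∫ σ in s₀..u, f σ)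
              = ∫ σ in (0:ℝ)..u, f σ :=
            intervalIntegral.integral_add_adjacent_intervals
              (hf_int 0 s₀ le_rfl (le_of_lt hs₀)) (hf_int s₀ u (le_of_lt hs₀) hu0)
          have hpos : (0:ℝ) ≤ ∫ σ in s₀..u, f σ :=
            intervalIntegral.integral_nonneg (le_of_lt hu)
              (fun x hx => hf_nonneg x (le_trans (le_of_lt hs₀) hx.1))
          linarith
        calc c₀ * (∫ σ in (0:ℝ)..s₀, f σ) ≤ c₀ * ∫ σ in (0:ℝ)..u, f σ := by
              apply mul_le_mul_of_nonneg_left hmono (by linarith)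
        _ ≤ u * f u := hsf u hu
      have htendsto : Tendsto (fun u => u * f u) (𝓝[>] s₀) (𝓝 (s₀ * f s₀)) := by
        have h1 : Tendsto f (𝓝[>] s₀) (𝓝 (f s₀)) := by
          have := (hf_cont s₀ (Set.mem_Ici.mpr (le_of_lt hs₀)))
          exact this.mono_left (nhdsWithin_mono s₀ (fun x hx => le_trans (le_of_lt hs₀) (le_of_lt hx)))
        have h2 : Tendsto (fun u : ℝ => u) (𝓝[>] s₀) (𝓝 s₀) :=
          tendsto_id.mono_left nhdsWithin_le_nhds
        exact h2.mul h1
      have := ge_of_tendsto htendsto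
        (eventually_mem_nhdsWithin.mono (fun u hu => hev u hu))
      rw [← h]
      linarith
    · exact hsf s h
  have hyoung := young_ge f finv hf_cont hf_mono hf0 hfinv_nonneg hfinv_left hfinv_right s hs_nn
  rw [hfs] at hyoung
  -- now combine
  have hA : (0:ℝ) ≤ c₀ - 1 := by linarith
  have hc1 : (0:ℝ) < c₀ - 1 := by linarith
  rw [div_mul_eq_mul_div, le_div_iff₀ hc1]
  have hts : t * finv t = s * f s := by rw [hfs]; ring
  rw [hts]
  nlinarith [hkey, hyoung, hfs₀]
end
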